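/- Let X ⊆ [2, m+1] be a fixed finite set. Then for all k, k' ≥ max(X) − 1, the number of permutations in S_{k+1} with descent top set exactly X equals the number of permutations in S_{k'+1} with descent top set exactly X. That is, |R(k, X)| is independent of k once k ≥ max(X) − 1. -/

import Mathlib

/-!
If `max X ≤ n + 1`, then `n + 2` is not a descent top of any `τ ∈ R(n + 1, X)`; since the
largest value is a descent top unless it stands in the last position, `τ` fixes the last
position. Deleting that fixed point is therefore a bijection `R(n + 1, X) → R(n, X)`, as
appending a fixed largest value changes no descent.
-/

open Finset

/-- Positions of descents of a permutation of `Fin (n+1)` in one-line notation. -/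
def descSet (n : ℕ) (σ : Equiv.Perm (Fin (n+1))) : Finset (Fin n) :=
  Finset.univ.filter (fun i : Fin n => σ i.succ < σ i.castSucc)

/-- Number of descents. -/
def des (n : ℕ) (σ : Equiv.Perm (Fin (n+1))) : ℕ := (descSet n σ).card

/-- Descent top set, with values written 1-based (so `DT n σ ⊆ [2, n+1]`). -/
def DT (n : ℕ) (σ : Equiv.Perm (Fin (n+1))) : Finset ℕ :=
  (descSet n σ).image (fun i => (σ i.castSucc : ℕ) + 1)

/-- `β!̂ = (k+1)^{β₁} k^{β₂} ⋯ 2^{β_k}` for a tuple `β` of length `k`. -/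
def hatFac (β : List ℕ) : ℕ :=
  (((List.range β.length).zip β).map (fun p => (β.length + 1 - p.1) ^ p.2)).prod

/-- `α(X)!̂` where, for `X = {x₁ < … < x_k}`, `α(X) = (x₁ - 1, x₂ - x₁, …, x_k - x_{k-1})`. -/
def alphaHat (X : Finset ℕ) : ℕ :=
  hatFac (List.zipWith (fun a b => b - a) (1 :: X.sort (· ≤ ·)) (X.sort (· ≤ ·)))

open Equiv

section ExtendLast

variable {m : ℕ}

def extendLast (σ : Perm (Fin m)) : Perm (Fin (m + 1)) where
  toFun := Fin.lastCases (Fin.last m) fun j => (σ j).castSucc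
  invFun := Fin.lastCases (Fin.last m) fun j => (σ.symm j).castSucc
  left_inv i := by induction i using Fin.lastCases <;> simp
  right_inv i := by induction i using Fin.lastCases <;> simp

@[simp] lemma extendLast_last (σ : Perm (Fin m)) : extendLast σ (Fin.last m) = Fin.last m := by
  simp [extendLast]

@[simp] lemma extendLast_castSucc (σ : Perm (Fin m)) (j : Fin m) :
    extendLast σ j.castSucc = (σ j).castSucc := by
  simp [extendLast]

lemma extendLast_injective : Function.Injective (extendLast (m := m)) := fun σ τ h =>
  Equiv.ext fun j => Fin.castSucc_injective _ <| by
    simpa using DFunLike.congr_fun h j.castSucc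

def restrictLast (τ : Perm (Fin (m + 1))) (h : τ (Fin.last m) = Fin.last m) : Perm (Fin m) where
  toFun j := (τ j.castSucc).castPred fun he =>
    (Fin.castSucc_lt_last j).ne (τ.injective (he.trans h.symm))
  invFun j := (τ.symm j.castSucc).castPred fun he =>
    (Fin.castSucc_lt_last j).ne' (by rw [← h, ← he, Equiv.apply_symm_apply])
  left_inv j := Fin.castSucc_injective _ (by simp)
  right_inv j := Fin.castSucc_injective _ (by simp)

lemma extendLast_restrictLast (τ : Perm (Fin (m + 1))) (h : τ (Fin.last m) = Fin.last m) :
    extendLast (restrictLast τ h) = τ :=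
  Equiv.ext fun i => by
    induction i using Fin.lastCases with
    | last => simp [h]
    | cast j => simp [restrictLast]

end ExtendLast

section DescentTops

variable {n : ℕ}

lemma descSet_extendLast (σ : Perm (Fin (n + 1))) :
    descSet (n + 1) (extendLast σ) = (descSet n σ).map Fin.castSuccEmb := by
  ext i
  induction i using Fin.lastCases with
  | last =>
    simp only [descSet, Fin.succ_last, extendLast_last, mem_filter, mem_univ, true_and, mem_map,
      Fin.coe_castSuccEmb]
    exact iff_of_false (Fin.le_last _).not_gt fun ⟨j, _, hj⟩ => Fin.castSucc_ne_last j hj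
  | cast j =>
    simp [descSet, Fin.succ_castSucc, -Fin.castSucc_succ]

lemma DT_extendLast (σ : Perm (Fin (n + 1))) : DT (n + 1) (extendLast σ) = DT n σ := by
  simp [DT, descSet_extendLast, map_eq_image, image_image, Function.comp_def]

lemma apply_last_eq_last_of_forall_DT_le (τ : Perm (Fin (n + 1 + 1)))
    (hτ : ∀ x ∈ DT (n + 1) τ, x ≤ n + 1) : τ (Fin.last (n + 1)) = Fin.last (n + 1) := by
  by_contra h
  obtain ⟨i, hi⟩ : ∃ i : Fin (n + 1), i.castSucc = τ.symm (Fin.last (n + 1)) :=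
    Fin.exists_castSucc_eq.mpr fun he => h (τ.symm_apply_eq.mp he).symm
  have hτi : τ i.castSucc = Fin.last (n + 1) := by rw [hi, Equiv.apply_symm_apply]
  have hdesc : i ∈ descSet (n + 1) τ := by
    simp only [descSet, mem_filter, mem_univ, true_and, hτi, Fin.lt_last_iff_ne_last]
    exact fun he => (Fin.castSucc_lt_succ (i := i)).ne' (τ.injective (he.trans hτi.symm))
  have := hτ _ (mem_image_of_mem _ hdesc)
  simp [hτi] at this

end DescentTops

-- The paper's `R(n, X)`.
def permsWithDT (n : ℕ) (X : Finset ℕ) : Finset (Perm (Fin (n + 1))) :=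
  univ.filter fun σ => DT n σ = X

lemma permsWithDT_succ {n : ℕ} {X : Finset ℕ} (hX : ∀ x ∈ X, x ≤ n + 1) :
    permsWithDT (n + 1) X = (permsWithDT n X).image extendLast := by
  ext τ
  simp only [permsWithDT, mem_filter, mem_univ, true_and, mem_image]
  constructor
  · rintro rfl
    have h := apply_last_eq_last_of_forall_DT_le τ hX
    exact ⟨restrictLast τ h, by rw [← DT_extendLast, extendLast_restrictLast],
      extendLast_restrictLast τ h⟩
  · rintro ⟨σ, hσ, rfl⟩
    rw [DT_extendLast, hσ]

lemma card_permsWithDT_of_le {m n : ℕ} {X : Finset ℕ} (hmn : m ≤ n) (hX : ∀ x ∈ X, x ≤ m + 1) :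
    #(permsWithDT n X) = #(permsWithDT m X) := by
  induction n, hmn using Nat.le_induction with
  | base => rfl
  | succ n hmn ih =>
    rw [permsWithDT_succ fun x hx => (hX x hx).trans (by omega),
      card_image_of_injective _ extendLast_injective, ih]

theorem card_DT_eq_stable_general (X : Finset ℕ) (k k' : ℕ)
    (hk : X.sup id ≤ k + 1) (hk' : X.sup id ≤ k' + 1) :
    (Finset.univ.filter (fun σ : Equiv.Perm (Fin (k+1)) => DT k σ = X)).card =
      (Finset.univ.filter (fun σ : Equiv.Perm (Fin (k'+1)) => DT k' σ = X)).card := by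
  have hX : ∀ x ∈ X, x ≤ min k k' + 1 := fun x hx =>
    (le_sup (f := id) hx).trans (by omega)
  exact (card_permsWithDT_of_le (min_le_left k k') hX).trans
    (card_permsWithDT_of_le (min_le_right k k') hX).symm

/-- The number of permutations in `S_{k+1}` with descent top set exactly `X` does not
depend on `k` once `k ≥ max X - 1`. -/
theorem card_DT_eq_stable (X : Finset ℕ) (hX : ∀ x ∈ X, 2 ≤ x) (k k' : ℕ)
    (hk : X.sup id ≤ k + 1) (hk' : X.sup id ≤ k' + 1) :
    (Finset.univ.filter (fun σ : Equiv.Perm (Fin (k+1)) => DT k σ = X)).card =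
      (Finset.univ.filter (fun σ : Equiv.Perm (Fin (k'+1)) => DT k' σ = X)).card :=
  card_DT_eq_stable_general X k k' hk hk'
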